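/- arXiv:2009.03996 — 2 statements merged into one kernel-verified Lean document; each statement's English description precedes it below -/
import Mathlib

section
/- If R ⊆ ℕ is a computably enumerable set and A ⊆ ℕ is bi-immune, then the symmetric difference A Δ R = (A \ R) ∪ (R \ A) is bi-immune. -/
/-- A set `A ⊆ ℕ` is immune: `A` is infinite and every infinite c.e. set
meets the complement of `A` (equivalently, `A` has no infinite c.e. subset). -/
def Immune (A : Set ℕ) : Prop :=
  A.Infinite ∧ ∀ R : Set ℕ, REPred (· ∈ R) → R.Infinite → (R ∩ Aᶜ).Nonempty

/-- A set is bi-immune if both it and its complement are immune. -/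
def BiImmune (A : Set ℕ) : Prop :=
  Immune A ∧ Immune Aᶜ

open scoped symmDiff

/-!
Removing a finite set from a c.e. set keeps it c.e., so an immune `B` contains no infinite c.e. set
even up to finitely many exceptions. If `B` is bi-immune and `W ⊆ B ∆ R` is c.e., then `W ∩ R` is
a c.e. subset of `Bᶜ`, hence finite, and `W \ B ⊆ W ∩ R`, so `W` is finite. Since
`(A ∆ R)ᶜ = Aᶜ ∆ R` and `Aᶜ` is bi-immune too, the same argument covers the complement.
-/

section Computability

variable {α : Type*} [Primcodable α]

theorem REPred.and {p q : α → Prop} (hp : REPred p) (hq : REPred q) :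
    REPred fun a => p a ∧ q a := by
  have h : Partrec fun a =>
      (Part.assert (p a) fun _ => Part.some ()).bind fun _ =>
        Part.assert (q a) fun _ => Part.some () :=
    hp.bind (hq.comp Computable.fst)
  exact h.dom_re.of_eq fun a => by simp [Part.assert]

theorem Set.Finite.computablePred_mem [DecidableEq α] {F : Set α} (hF : F.Finite) :
    ComputablePred (· ∈ F) := by
  have h : PrimrecPred fun a => ∃ b ∈ hF.toFinset.toList, b = a :=
    (PrimrecRel.exists_mem_list Primrec.eq).comp (Primrec.const _) Primrec.id
  exact h.computablePred.of_eq fun a => by simp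

theorem REPred.diff_of_finite [DecidableEq α] {W F : Set α} (hW : REPred (· ∈ W))
    (hF : F.Finite) : REPred (· ∈ W \ F) :=
  hW.and hF.computablePred_mem.not.to_re

end Computability

namespace Immune

variable {B W : Set ℕ}

theorem finite_of_subset (hB : Immune B) (hW : REPred (· ∈ W)) (hWB : W ⊆ B) : W.Finite := by
  by_contra hinf
  obtain ⟨x, hxW, hxB⟩ := hB.2 W hW hinf
  exact hxB (hWB hxW)

theorem finite_of_diff_finite (hB : Immune B) (hW : REPred (· ∈ W)) (hWB : (W \ B).Finite) :
    W.Finite := by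
  have hcore : (W \ (W \ B)).Finite :=
    hB.finite_of_subset (hW.diff_of_finite hWB) fun x hx => by_contra fun hxB => hx.2 ⟨hx.1, hxB⟩
  simpa using hcore.union hWB

end Immune

namespace BiImmune

variable {B : Set ℕ}

theorem compl (hB : BiImmune B) : BiImmune Bᶜ :=
  ⟨hB.2, (compl_compl B).symm ▸ hB.1⟩

theorem immune_symmDiff {R : Set ℕ} (hB : BiImmune B) (hR : REPred (· ∈ R)) :
    Immune (B ∆ R) := by
  obtain ⟨hB, hBc⟩ := hB
  refine ⟨fun hfin => hB.1 ?_, fun W hW hWinf => ?_⟩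
  · have hRfin : R.Finite := hB.finite_of_diff_finite hR (hfin.subset Set.subset_union_right)
    exact (hfin.union hRfin).subset (le_symmDiff_sup_right B R)
  · by_contra hdisj
    have hWsub : W ⊆ B ∆ R := fun x hxW => by_contra fun hx => hdisj ⟨x, hxW, hx⟩
    have hWR : (W ∩ R).Finite :=
      hBc.finite_of_subset (hW.and hR) fun x hx => by
        rcases hWsub hx.1 with h | h
        · exact absurd hx.2 h.2
        · exact h.2
    refine hWinf (hB.finite_of_diff_finite hW (hWR.subset fun x hx => ⟨hx.1, ?_⟩))
    rcases hWsub hx.1 with h | h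
    · exact absurd h.1 hx.2
    · exact h.1

end BiImmune

/-- If `R` is c.e. and `A` is bi-immune, then the symmetric difference
`A Δ R = (A \ R) ∪ (R \ A)` is bi-immune. -/
theorem biImmune_symmDiff (A R : Set ℕ) (hR : REPred (· ∈ R)) (hA : BiImmune A) :
    BiImmune ((A \ R) ∪ (R \ A)) := by
  have hcompl : (A ∆ R)ᶜ = Aᶜ ∆ R := by
    ext x
    simp only [Set.mem_compl_iff, Set.mem_symmDiff]
    tauto
  exact ⟨hA.immune_symmDiff hR, hcompl ▸ hA.compl.immune_symmDiff hR⟩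
end

section
/- The collection of bi-immune subsets of ℕ is uncountable; that is, the set {A : Set ℕ | A is bi-immune} is not countable. -/
/-! Enumerate the countably many infinite c.e. sets as `R₀, R₁, …` and choose an injective
sequence `x` with `x (2n), x (2n+1) ∈ Rₙ`. For `S ⊆ ℕ`, taking from the `n`-th pair its first
element when `n ∈ S` and its second otherwise gives a set that meets every `Rₙ` and misses a point
of it, hence is bi-immune; and `S` can be read off from that set. -/

open Set Function

theorem rePred_mem_Ioi (N : ℕ) : REPred (· ∈ Ioi N) :=
  (Primrec.nat_lt.comp (Primrec.const N) Primrec.id).computablePred.to_re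

theorem countable_setOf_rePred : {R : Set ℕ | REPred (· ∈ R)}.Countable := by
  refine (countable_range fun g : {g : ℕ →. ℕ // Partrec g} => {n | (g.1 n).Dom}).mono ?_
  intro R hR
  exact ⟨⟨_, hR.map (Computable.const 0).to₂⟩, by ext n; simp [Part.assert]⟩

theorem exists_setOf_rePred_infinite_eq_range :
    ∃ e : ℕ → Set ℕ, {R : Set ℕ | REPred (· ∈ R) ∧ R.Infinite} = range e :=
  (countable_setOf_rePred.mono fun _ hR => hR.1).exists_eq_range
    ⟨Ioi 0, rePred_mem_Ioi 0, Ioi_infinite 0⟩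

theorem infinite_of_forall_rePred_inter_nonempty {A : Set ℕ}
    (h : ∀ R : Set ℕ, REPred (· ∈ R) → R.Infinite → (R ∩ A).Nonempty) : A.Infinite := by
  intro hA
  obtain ⟨N, hN⟩ := hA.bddAbove
  obtain ⟨a, haN, haA⟩ := h (Ioi N) (rePred_mem_Ioi N) (Ioi_infinite N)
  exact (hN haA).not_gt haN

theorem biImmune_iff {A : Set ℕ} : BiImmune A ↔
    ∀ R : Set ℕ, REPred (· ∈ R) → R.Infinite → (R ∩ A).Nonempty ∧ (R ∩ Aᶜ).Nonempty := by
  refine ⟨fun ⟨⟨_, hA⟩, ⟨_, hAc⟩⟩ R hR hRi => ⟨?_, hA R hR hRi⟩, fun h => ⟨⟨?_, ?_⟩, ⟨?_, ?_⟩⟩⟩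
  · simpa using hAc R hR hRi
  · exact infinite_of_forall_rePred_inter_nonempty fun R hR hRi => (h R hR hRi).1
  · exact fun R hR hRi => (h R hR hRi).2
  · exact infinite_of_forall_rePred_inter_nonempty fun R hR hRi => (h R hR hRi).2
  · simpa using fun R hR hRi => (h R hR hRi).1

theorem exists_strictMono_forall_mem {α : Type*} [LinearOrder α] [LocallyFiniteOrderBot α]
    {s : ℕ → Set α} (hs : ∀ n, (s n).Infinite) : ∃ x : ℕ → α, StrictMono x ∧ ∀ n, x n ∈ s n := by
  choose next hnext_mem hnext_gt using fun n a => (hs n).exists_gt a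
  obtain ⟨x₀, hx₀⟩ := (hs 0).nonempty
  let x : ℕ → α := fun n => Nat.rec x₀ (fun n xn => next (n + 1) xn) n
  refine ⟨x, strictMono_nat_of_lt_succ fun n => hnext_gt _ _, ?_⟩
  rintro (_ | n)
  exacts [hx₀, hnext_mem _ _]

def pairSelection (x : ℕ → ℕ) (S : Set ℕ) : Set ℕ :=
  x '' {k | k % 2 = 0 ↔ k / 2 ∈ S}

theorem mem_pairSelection_iff {x : ℕ → ℕ} (hx : Injective x) {S : Set ℕ} {k : ℕ} :
    x k ∈ pairSelection x S ↔ (k % 2 = 0 ↔ k / 2 ∈ S) :=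
  hx.mem_set_image

theorem mem_pairSelection_even {x : ℕ → ℕ} (hx : Injective x) {S : Set ℕ} {n : ℕ} :
    x (2 * n) ∈ pairSelection x S ↔ n ∈ S := by
  simp [mem_pairSelection_iff hx]

theorem mem_pairSelection_odd {x : ℕ → ℕ} (hx : Injective x) {S : Set ℕ} {n : ℕ} :
    x (2 * n + 1) ∈ pairSelection x S ↔ n ∉ S := by
  simp [mem_pairSelection_iff hx, Nat.add_mod, show (2 * n + 1) / 2 = n by omega]

theorem pairSelection_injective {x : ℕ → ℕ} (hx : Injective x) :
    Injective (pairSelection x) := fun S T h =>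
  ext fun n => by rw [← mem_pairSelection_even hx, h, mem_pairSelection_even hx]

theorem biImmune_pairSelection {x : ℕ → ℕ} (hx : Injective x)
    (hpair : ∀ R : Set ℕ, REPred (· ∈ R) → R.Infinite → ∃ n, x (2 * n) ∈ R ∧ x (2 * n + 1) ∈ R)
    (S : Set ℕ) : BiImmune (pairSelection x S) := by
  refine biImmune_iff.2 fun R hR hRi => ?_
  obtain ⟨n, h₀, h₁⟩ := hpair R hR hRi
  by_cases hn : n ∈ S
  · exact ⟨⟨_, h₀, (mem_pairSelection_even hx).2 hn⟩,
      ⟨_, h₁, mt (mem_pairSelection_odd hx).1 (not_not.2 hn)⟩⟩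
  · exact ⟨⟨_, h₁, (mem_pairSelection_odd hx).2 hn⟩,
      ⟨_, h₀, mt (mem_pairSelection_even hx).1 hn⟩⟩

instance : Uncountable (Set ℕ) :=
  ⟨fun _ => let ⟨f, hf⟩ := Countable.exists_injective_nat (Set ℕ); cantor_injective f hf⟩

/-- The collection of bi-immune subsets of `ℕ` is uncountable. -/
theorem biImmune_uncountable : ¬ {A : Set ℕ | BiImmune A}.Countable := by
  obtain ⟨e, he⟩ := exists_setOf_rePred_infinite_eq_range
  have he_inf (n : ℕ) : (e n).Infinite := (he.superset (mem_range_self n)).2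
  obtain ⟨x, hx, hxe⟩ := exists_strictMono_forall_mem fun k => he_inf (k / 2)
  have hpair (R : Set ℕ) (hR : REPred (· ∈ R)) (hRi : R.Infinite) :
      ∃ n, x (2 * n) ∈ R ∧ x (2 * n + 1) ∈ R := by
    obtain ⟨n, rfl⟩ := he.subset ⟨hR, hRi⟩
    exact ⟨n, by simpa using hxe (2 * n),
      by simpa [show (2 * n + 1) / 2 = n by omega] using hxe (2 * n + 1)⟩
  intro hcount
  exact not_countable_univ <| MapsTo.countable_of_injOn
    (fun S _ => biImmune_pairSelection hx.injective hpair S)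
    (pairSelection_injective hx.injective).injOn hcount
end
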